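/- arXiv:2404.13382 — 3 statements merged into one kernel-verified Lean document; each statement's English description precedes it below -/
import Mathlib

section
/- Let $F : \mathbb{R}^n \to \mathbb{R}$ be differentiable with $L$-Lipschitz gradient, let $x \in \mathbb{R}^n$, $g \in \mathbb{R}^n$ with $g \ne 0$, $\alpha > 0$, $0 < \gamma_2 < \gamma_1$, and suppose $1/\gamma_1 \le \|g\| \le 1/\gamma_2$. Set $p = -\alpha g / \|g\|$ and $x^+ = x + p$. Then $F(x^+) \le F(x) - \tfrac{1}{2}\alpha(\gamma_2 - \alpha\gamma_1^2 L)\|g\|^2 + \alpha \frac{\gamma_1^2}{2\gamma_2}\|\nabla F(x) - g\|^2$. -/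
/-!
Apply the descent lemma to the step `p = -(α / ‖g‖) • g`, which has length exactly `α`. Writing
`F' x = g + (F' x - g)`, Cauchy–Schwarz gives `⟪F' x, p⟫ ≤ -α ‖g‖ + α ‖F' x - g‖`, and Young's
inequality trades the error term `α ‖F' x - g‖` for its square at the price of `α γ₂ / (2 γ₁²)`.
The bounds `γ₂ ‖g‖ ≤ 1 ≤ γ₁ ‖g‖` then turn `-α ‖g‖` and `L α² / 2` into the multiples of `‖g‖²`
in the claim.
-/

open InnerProductSpace

section InnerProductSpace

variable {E : Type*} [NormedAddCommGroup E] [InnerProductSpace ℝ E] {F : E → ℝ} {F' : E → E}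

theorem HasGradientAt.hasDerivAt_comp_add_smul [CompleteSpace E] {x p : E} {t : ℝ}
    (h : HasGradientAt F (F' (x + t • p)) (x + t • p)) :
    HasDerivAt (fun s : ℝ => F (x + s • p)) ⟪F' (x + t • p), p⟫_ℝ t := by
  have hline : HasDerivAt (fun s : ℝ => x + s • p) p t := by
    simpa using ((hasDerivAt_id t).smul_const p).const_add x
  have hcomp := h.hasFDerivAt.comp_hasDerivAt t hline
  simp only [Function.comp_def, toDual_apply_apply] at hcomp
  exact hcomp

theorem LipschitzWith.inner_sub_smul_le {K : NNReal} (hlip : LipschitzWith K F') (x p : E)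
    {t : ℝ} (ht : 0 ≤ t) : ⟪F' (x + t • p) - F' x, p⟫_ℝ ≤ K * t * ‖p‖ ^ 2 :=
  calc ⟪F' (x + t • p) - F' x, p⟫_ℝ ≤ ‖F' (x + t • p) - F' x‖ * ‖p‖ := real_inner_le_norm _ _
    _ ≤ K * ‖t • p‖ * ‖p‖ := by
        gcongr
        simpa using hlip.norm_sub_le (x + t • p) x
    _ = K * t * ‖p‖ ^ 2 := by rw [norm_smul, Real.norm_of_nonneg ht]; ring

theorem image_add_le_of_hasGradientAt_of_lipschitzWith [CompleteSpace E] {K : NNReal}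
    (hgrad : ∀ y, HasGradientAt F (F' y) y) (hlip : LipschitzWith K F') (x p : E) :
    F (x + p) ≤ F x + ⟪F' x, p⟫_ℝ + K / 2 * ‖p‖ ^ 2 := by
  -- `φ` is the gap between `F` and its quadratic model along the ray; it has nonpositive slope.
  set φ : ℝ → ℝ := fun t => F (x + t • p) - t * ⟪F' x, p⟫_ℝ - K / 2 * t ^ 2 * ‖p‖ ^ 2
  have hφ : ∀ t, HasDerivAt φ (⟪F' (x + t • p), p⟫_ℝ - ⟪F' x, p⟫_ℝ - K * t * ‖p‖ ^ 2) t := by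
    intro t
    have hquad := ((hasDerivAt_pow 2 t).const_mul (K / 2 : ℝ)).mul_const (‖p‖ ^ 2)
    refine (((hgrad _).hasDerivAt_comp_add_smul.fun_sub
      ((hasDerivAt_id' t).mul_const _)).fun_sub hquad).congr_deriv ?_
    ring
  have hanti : AntitoneOn φ (Set.Ici 0) := by
    refine antitoneOn_of_hasDerivWithinAt_nonpos (convex_Ici 0)
      (fun t _ => (hφ t).continuousAt.continuousWithinAt)
      (fun t _ => (hφ t).hasDerivWithinAt) fun t ht => ?_
    rw [interior_Ici] at ht
    have := hlip.inner_sub_smul_le x p (le_of_lt ht)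
    rw [inner_sub_left] at this
    linarith
  have h01 := hanti Set.self_mem_Ici (show (1 : ℝ) ∈ Set.Ici 0 by norm_num) zero_le_one
  norm_num [φ] at h01
  linarith

theorem norm_neg_div_norm_smul {g : E} (hg : g ≠ 0) {α : ℝ} (hα : 0 ≤ α) :
    ‖(-(α / ‖g‖)) • g‖ = α := by
  have hgn : ‖g‖ ≠ 0 := norm_ne_zero_iff.mpr hg
  rw [norm_smul, norm_neg, Real.norm_of_nonneg (by positivity), div_mul_cancel₀ _ hgn]

theorem inner_neg_div_norm_smul_le (v g : E) {α : ℝ} (hα : 0 ≤ α) :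
    ⟪v, (-(α / ‖g‖)) • g⟫_ℝ ≤ -(α * ‖g‖) + α * ‖v - g‖ := by
  have hcs : -(‖v - g‖ * ‖g‖) ≤ ⟪v - g, g⟫_ℝ := neg_le_of_abs_le (abs_real_inner_le_norm _ _)
  have hsplit : ⟪v, g⟫_ℝ = ⟪v - g, g⟫_ℝ + ‖g‖ ^ 2 := by
    rw [inner_sub_left, real_inner_self_eq_norm_sq]; ring
  rcases eq_or_ne g 0 with rfl | hg
  · simpa using mul_nonneg hα (norm_nonneg v)
  have hgn : 0 < ‖g‖ := norm_pos_iff.mpr hg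
  rw [real_inner_smul_right, hsplit]
  calc -(α / ‖g‖) * (⟪v - g, g⟫_ℝ + ‖g‖ ^ 2)
      ≤ -(α / ‖g‖) * (-(‖v - g‖ * ‖g‖) + ‖g‖ ^ 2) := by
        apply mul_le_mul_of_nonpos_left (by linarith)
        exact neg_nonpos.mpr (by positivity)
    _ = -(α * ‖g‖) + α * ‖v - g‖ := by field_simp; ring

end InnerProductSpace

theorem le_mul_sq_add_one_div_four_mul {c : ℝ} (hc : 0 < c) (e : ℝ) :
    e ≤ c * e ^ 2 + 1 / (4 * c) := by
  have hsq : 0 ≤ (2 * c * e - 1) ^ 2 / (4 * c) := by positivity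
  have hexp : (2 * c * e - 1) ^ 2 / (4 * c) = c * e ^ 2 + 1 / (4 * c) - e := by
    field_simp; ring
  linarith

theorem stmt_5_general {n : ℕ} (F : EuclideanSpace ℝ (Fin n) → ℝ)
    (F' : EuclideanSpace ℝ (Fin n) → EuclideanSpace ℝ (Fin n)) (L : ℝ) (hL : 0 < L)
    (hgrad : ∀ x, HasGradientAt F (F' x) x)
    (hlip : LipschitzWith (Real.toNNReal L) F')
    (x g : EuclideanSpace ℝ (Fin n)) (α γ₁ γ₂ : ℝ)
    (hα : 0 < α) (hγ₂ : 0 < γ₂) (hγ : γ₂ < γ₁)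
    (hlo : 1 / γ₁ ≤ ‖g‖) (hhi : ‖g‖ ≤ 1 / γ₂) :
    F (x + (-(α / ‖g‖)) • g) ≤
      F x - (1 / 2) * α * (γ₂ - α * γ₁ ^ 2 * L) * ‖g‖ ^ 2
        + α * (γ₁ ^ 2 / (2 * γ₂)) * ‖F' x - g‖ ^ 2 := by
  have hγ₁ : 0 < γ₁ := hγ₂.trans hγ
  have hgn : 0 < ‖g‖ := (one_div_pos.mpr hγ₁).trans_le hlo
  have hupper : γ₂ * ‖g‖ ≤ 1 := (le_div_iff₀' hγ₂).mp hhi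
  have hlower : 1 ≤ γ₁ * ‖g‖ := (div_le_iff₀' hγ₁).mp hlo
  have hdescent := image_add_le_of_hasGradientAt_of_lipschitzWith hgrad hlip x (-(α / ‖g‖) • g)
  rw [Real.coe_toNNReal _ hL.le, norm_neg_div_norm_smul (norm_pos_iff.mp hgn) hα.le] at hdescent
  have hyoung :=
    le_mul_sq_add_one_div_four_mul (c := γ₁ ^ 2 / (2 * γ₂)) (by positivity) ‖F' x - g‖
  have hyoung_const : 1 / (4 * (γ₁ ^ 2 / (2 * γ₂))) ≤ ‖g‖ / 2 := by
    rw [div_le_div_iff₀ (by positivity) (by norm_num)]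
    field_simp
    nlinarith
  calc F (x + (-(α / ‖g‖)) • g)
      ≤ F x + ⟪F' x, (-(α / ‖g‖)) • g⟫_ℝ + L / 2 * α ^ 2 := hdescent
    _ ≤ F x - α * ‖g‖ + α * ‖F' x - g‖ + L / 2 * α ^ 2 := by
        linarith [inner_neg_div_norm_smul_le (F' x) g hα.le]
    _ ≤ _ := by
        nlinarith [mul_le_mul_of_nonneg_left hyoung hα.le,
          mul_le_mul_of_nonneg_left hupper hgn.le,
          mul_le_mul_of_nonneg_left (one_le_pow₀ hlower : 1 ≤ (γ₁ * ‖g‖) ^ 2)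
            (by positivity : 0 ≤ L * α ^ 2)]

theorem stmt_5 {n : ℕ} (F : EuclideanSpace ℝ (Fin n) → ℝ)
    (F' : EuclideanSpace ℝ (Fin n) → EuclideanSpace ℝ (Fin n)) (L : ℝ) (hL : 0 < L)
    (hgrad : ∀ x, HasGradientAt F (F' x) x)
    (hlip : LipschitzWith (Real.toNNReal L) F')
    (x g : EuclideanSpace ℝ (Fin n)) (hg : g ≠ 0) (α γ₁ γ₂ : ℝ)
    (hα : 0 < α) (hγ₂ : 0 < γ₂) (hγ : γ₂ < γ₁)
    (hlo : 1 / γ₁ ≤ ‖g‖) (hhi : ‖g‖ ≤ 1 / γ₂) :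
    F (x + (-(α / ‖g‖)) • g) ≤
      F x - (1 / 2) * α * (γ₂ - α * γ₁ ^ 2 * L) * ‖g‖ ^ 2
        + α * (γ₁ ^ 2 / (2 * γ₂)) * ‖F' x - g‖ ^ 2 :=
  stmt_5_general F F' L hL hgrad hlip x g α γ₁ γ₂ hα hγ₂ hγ hlo hhi
end

section
/- Let $F : \mathbb{R}^n \to \mathbb{R}$ be differentiable with $L$-Lipschitz gradient, bounded below by $F_*$, and satisfying the PL condition $\|\nabla F(x)\|^2 \ge 2\mu(F(x) - F_*)$ for some $\mu > 0$. Let $0 < \gamma_2 < \gamma_1$ and $\alpha < \min\{\frac{\gamma_2}{2\gamma_1^2 L}, \frac{1}{\mu\gamma_2}\}$, and let $(x_k)$ be iterates of TRish with stochastic gradients $g_k$ satisfying $\mathbb{E}_k[g_k] = \nabla F(x_k)$ and $\mathbb{E}_k[\|\nabla F(x_k) - g_k\|^2] < M_g$. Then with $\beta = \frac{\gamma_1^2 - \gamma_2^2}{2\gamma_2} + \tfrac{1}{2}\alpha\gamma_1^2 L$, one has $\mathbb{E}[F(x_{k+1})] - F_* \le (1 - \tfrac{1}{2}\alpha\mu\gamma_2)^{k+1}(F(x_0)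 - F_*) + \frac{2\beta M_g}{\mu\gamma_2}$ for all $k$, hence $\limsup_{k\to\infty} \mathbb{E}[F(x_{k+1})] - F_* \le \frac{2\beta M_g}{\mu\gamma_2}$. -/
/-!
A TRish step is `-θ α g` with a length `θ ∈ [γ₂, γ₁]` that depends on `g`. The descent lemma for
an `L`-smooth `F`, written in terms of `∇F` and the noise `g - ∇F`, bounds `F(x + p) - F(x)` by
`θ̄ α (‖∇F‖² - ⟪∇F, g⟫) - γ₂ α / 2 ‖∇F‖² + α β ‖∇F - g‖²`, where `θ̄` is the mean of
`θ ↦ θ - Lαθ²` at `γ₁` and `γ₂`: the remainder is a quadratic form whose discriminant is controlled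
because that map is increasing on `[γ₂, γ₁]`. As `θ̄` does not depend on `g`, unbiasedness kills
the first term in expectation, and the PL inequality turns the rest into the contraction
`e_{k+1} ≤ (1 - αμγ₂) e_k + αβM_g` for the gap `e_k = 𝔼 F(x_k) - F⋆`. The estimate
`‖∇F‖² ≤ 2L (F - F⋆)` makes `∇F(x_k)` square integrable.
-/

open MeasureTheory
open scoped RealInnerProductSpace NNReal

section Smooth

variable {E : Type*} [NormedAddCommGroup E] [InnerProductSpace ℝ E] [CompleteSpace E]
  {F : E → ℝ} {F' : E → E} {K : ℝ≥0}

theorem le_add_inner_add_of_lipschitzWith_gradient (hgrad : ∀ y, HasGradientAt F (F' y) y)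
    (hlip : LipschitzWith K F') (y p : E) :
    F (y + p) ≤ F y + ⟪F' y, p⟫ + K / 2 * ‖p‖ ^ 2 := by
  set ψ : ℝ → ℝ := fun t => F (y + t • p) - t * ⟪F' y, p⟫ - K / 2 * t ^ 2 * ‖p‖ ^ 2
  have hψ : ∀ t, HasDerivAt ψ (⟪F' (y + t • p) - F' y, p⟫ - K * t * ‖p‖ ^ 2) t := by
    intro t
    have hline : HasDerivAt (fun s : ℝ => y + s • p) p t := by
      simpa using ((hasDerivAt_id t).smul_const p).const_add y
    have hF : HasDerivAt (fun s : ℝ => F (y + s • p)) ⟪F' (y + t • p), p⟫ t := by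
      have := (hgrad (y + t • p)).hasFDerivAt.comp_hasDerivAt t hline
      simp only [InnerProductSpace.toDual_apply_apply] at this
      exact this
    refine ((hF.sub ((hasDerivAt_id t).mul_const ⟪F' y, p⟫)).sub
      (((hasDerivAt_pow 2 t).const_mul ((K : ℝ) / 2)).mul_const (‖p‖ ^ 2))).congr_deriv ?_
    simp only [inner_sub_left, one_mul]
    ring
  have hanti : AntitoneOn ψ (Set.Icc 0 1) := by
    refine antitoneOn_of_deriv_nonpos (convex_Icc 0 1)
      (fun t _ => (hψ t).continuousAt.continuousWithinAt)
      (fun t _ => (hψ t).differentiableAt.differentiableWithinAt) fun t ht => ?_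
    rw [interior_Icc] at ht
    rw [(hψ t).deriv, sub_nonpos]
    calc ⟪F' (y + t • p) - F' y, p⟫ ≤ ‖F' (y + t • p) - F' y‖ * ‖p‖ := real_inner_le_norm _ _
      _ ≤ K * ‖t • p‖ * ‖p‖ := by
        gcongr
        simpa [dist_eq_norm] using hlip.dist_le_mul (y + t • p) y
      _ = K * t * ‖p‖ ^ 2 := by rw [norm_smul, Real.norm_of_nonneg ht.1.le]; ring
  have := hanti (Set.left_mem_Icc.2 zero_le_one) (Set.right_mem_Icc.2 zero_le_one) zero_le_one
  simp only [ψ] at this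
  norm_num at this
  linarith

theorem norm_sq_le_of_lipschitzWith_gradient (hgrad : ∀ y, HasGradientAt F (F' y) y)
    (hlip : LipschitzWith K F') (hK : 0 < K) {m : ℝ} (hbdd : ∀ y, m ≤ F y) (y : E) :
    ‖F' y‖ ^ 2 ≤ 2 * K * (F y - m) := by
  have hK' : (0 : ℝ) < K := hK
  have h := (hbdd _).trans
    (le_add_inner_add_of_lipschitzWith_gradient hgrad hlip y (-(K : ℝ)⁻¹ • F' y))
  rw [inner_smul_right, real_inner_self_eq_norm_sq, norm_smul, mul_pow, norm_neg, norm_inv,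
    Real.norm_of_nonneg hK'.le] at h
  have hcoef : -(K : ℝ)⁻¹ * ‖F' y‖ ^ 2 + K / 2 * ((K : ℝ)⁻¹ ^ 2 * ‖F' y‖ ^ 2)
      = -(‖F' y‖ ^ 2 / (2 * K)) := by
    field_simp; ring
  rw [add_assoc, hcoef, ← sub_eq_add_neg, le_sub_comm, div_le_iff₀ (by positivity)] at h
  linarith

end Smooth

theorem inner_quadratic_nonneg {E : Type*} [NormedAddCommGroup E] [InnerProductSpace ℝ E]
    {A c C : ℝ} (hA : 0 < A) (hdisc : c ^ 2 ≤ 4 * A * C) (u w : E) :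
    0 ≤ A * ‖u‖ ^ 2 + c * ⟪u, w⟫ + C * ‖w‖ ^ 2 := by
  have hsq : ‖(2 * A) • u + c • w‖ ^ 2
      = 4 * A ^ 2 * ‖u‖ ^ 2 + 4 * A * c * ⟪u, w⟫ + c ^ 2 * ‖w‖ ^ 2 := by
    rw [norm_add_sq_real, norm_smul, norm_smul, real_inner_smul_left, real_inner_smul_right,
      Real.norm_eq_abs, Real.norm_eq_abs, mul_pow, mul_pow, sq_abs, sq_abs]
    ring
  nlinarith [sq_nonneg ‖(2 * A) • u + c • w‖, sq_nonneg ‖w‖,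
    mul_nonneg (sub_nonneg.2 hdisc) (sq_nonneg ‖w‖)]

theorem trish_coeff_pos_and_discrim_le {h γ₁ γ₂ β θ : ℝ} (hh : 0 ≤ h) (hγ₂ : 0 < γ₂) (hγ : γ₂ ≤ γ₁)
    (hsmall : 2 * h * γ₁ ^ 2 ≤ γ₂) (hβ : (γ₁ ^ 2 - γ₂ ^ 2) / (2 * γ₂) + h * γ₁ ^ 2 / 2 ≤ β)
    (hθ₁ : γ₂ ≤ θ) (hθ₂ : θ ≤ γ₁) :
    0 < θ - h * θ ^ 2 / 2 - γ₂ / 2 ∧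
      (θ - h * θ ^ 2 - (γ₁ + γ₂ - h * (γ₁ ^ 2 + γ₂ ^ 2)) / 2) ^ 2
        ≤ 4 * (θ - h * θ ^ 2 / 2 - γ₂ / 2) * (β - h * θ ^ 2 / 2) := by
  have hγ₁ : 0 < γ₁ := hγ₂.trans_le hγ
  have hhγ₁ : 2 * h * γ₁ ≤ 1 := by nlinarith
  have hA : γ₂ / 4 ≤ θ - h * θ ^ 2 / 2 - γ₂ / 2 := by nlinarith [mul_le_mul_of_nonneg_left hθ₂ hh]
  have hC : (γ₁ ^ 2 - γ₂ ^ 2) / (2 * γ₂) ≤ β - h * θ ^ 2 / 2 := by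
    nlinarith [mul_le_mul_of_nonneg_left (pow_le_pow_left₀ (hγ₂.le.trans hθ₁) hθ₂ 2) hh]
  -- `θ ↦ θ - h θ²` is increasing on `[γ₂, γ₁]`, and the constant is the mean of its endpoint values
  have hX : 0 ≤ (θ - γ₂) * (1 - h * (θ + γ₂)) := mul_nonneg (by linarith) (by nlinarith)
  have hY : 0 ≤ (γ₁ - θ) * (1 - h * (γ₁ + θ)) := mul_nonneg (by linarith) (by nlinarith)
  have hX' : 0 ≤ (θ - γ₂) * (h * (θ + γ₂)) := mul_nonneg (by linarith) (by nlinarith)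
  have hY' : 0 ≤ (γ₁ - θ) * (h * (γ₁ + θ)) := mul_nonneg (by linarith) (by nlinarith)
  have hc : (θ - h * θ ^ 2 - (γ₁ + γ₂ - h * (γ₁ ^ 2 + γ₂ ^ 2)) / 2) ^ 2 ≤ ((γ₁ - γ₂) / 2) ^ 2 :=
    sq_le_sq' (by linarith) (by linarith)
  have hdisc : ((γ₁ - γ₂) / 2) ^ 2 ≤ 4 * (γ₂ / 4) * ((γ₁ ^ 2 - γ₂ ^ 2) / (2 * γ₂)) := by
    rw [show 4 * (γ₂ / 4) * ((γ₁ ^ 2 - γ₂ ^ 2) / (2 * γ₂)) = (γ₁ ^ 2 - γ₂ ^ 2) / 2 by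
      field_simp]
    nlinarith
  refine ⟨by linarith, hc.trans (hdisc.trans ?_)⟩
  have : 0 ≤ (γ₁ ^ 2 - γ₂ ^ 2) / (2 * γ₂) := div_nonneg (by nlinarith) (by positivity)
  gcongr
  linarith

theorem trish_beta_nonneg {h γ₁ γ₂ β : ℝ} (hh : 0 ≤ h) (hγ₂ : 0 < γ₂) (hγ : γ₂ ≤ γ₁)
    (hβ : (γ₁ ^ 2 - γ₂ ^ 2) / (2 * γ₂) + h * γ₁ ^ 2 / 2 ≤ β) : 0 ≤ β := by
  have := pow_le_pow_left₀ hγ₂.le hγ 2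
  have : 0 ≤ (γ₁ ^ 2 - γ₂ ^ 2) / (2 * γ₂) := div_nonneg (by linarith) (by positivity)
  have : 0 ≤ h * γ₁ ^ 2 / 2 := by positivity
  linarith

section Step

variable {E : Type*} [NormedAddCommGroup E] [InnerProductSpace ℝ E]

noncomputable def trishStep (α γ₁ γ₂ : ℝ) (v : E) : E :=
  if ‖v‖ < 1 / γ₁ then (-(γ₁ * α)) • v
  else if ‖v‖ ≤ 1 / γ₂ then (-(α / ‖v‖)) • v
  else (-(γ₂ * α)) • v

theorem exists_trishStep_eq_smul {α γ₁ γ₂ : ℝ} (hγ₂ : 0 < γ₂) (hγ : γ₂ ≤ γ₁) (v : E) :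
    ∃ θ, γ₂ ≤ θ ∧ θ ≤ γ₁ ∧ trishStep α γ₁ γ₂ v = (-(θ * α)) • v := by
  unfold trishStep
  split_ifs with h₁ h₂
  · exact ⟨γ₁, hγ, le_rfl, rfl⟩
  · have hv : 0 < ‖v‖ := lt_of_lt_of_le (one_div_pos.2 (hγ₂.trans_le hγ)) (not_lt.1 h₁)
    refine ⟨1 / ‖v‖, ?_, ?_, by rw [one_div_mul_eq_div]⟩
    · rwa [le_one_div hγ₂ hv]
    · rw [one_div_le hv (hγ₂.trans_le hγ)]; exact not_lt.1 h₁
  · exact ⟨γ₂, le_rfl, hγ, rfl⟩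

variable [CompleteSpace E] {F : E → ℝ} {F' : E → E} {K : ℝ≥0}

theorem apply_add_trishStep_le (hgrad : ∀ y, HasGradientAt F (F' y) y) (hlip : LipschitzWith K F')
    {α γ₁ γ₂ β : ℝ} (hα : 0 < α) (hγ₂ : 0 < γ₂) (hγ : γ₂ ≤ γ₁)
    (hsmall : 2 * (K * α) * γ₁ ^ 2 ≤ γ₂)
    (hβ : (γ₁ ^ 2 - γ₂ ^ 2) / (2 * γ₂) + K * α * γ₁ ^ 2 / 2 ≤ β) (y v : E) :
    F (y + trishStep α γ₁ γ₂ v) ≤ F y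
      + (γ₁ + γ₂ - K * α * (γ₁ ^ 2 + γ₂ ^ 2)) / 2 * α * (‖F' y‖ ^ 2 - ⟪F' y, v⟫)
      - γ₂ * α / 2 * ‖F' y‖ ^ 2 + α * β * ‖F' y - v‖ ^ 2 := by
  obtain ⟨θ, hθ₁, hθ₂, hstep⟩ := exists_trishStep_eq_smul (α := α) hγ₂ hγ v
  obtain ⟨hA, hdisc⟩ := trish_coeff_pos_and_discrim_le (by positivity) hγ₂ hγ hsmall hβ hθ₁ hθ₂
  have hQ := inner_quadratic_nonneg hA hdisc (F' y) (v - F' y)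
  have hdesc := le_add_inner_add_of_lipschitzWith_gradient hgrad hlip y (-(θ * α) • v)
  have hinner : ⟪F' y, v⟫ = ‖F' y‖ ^ 2 + ⟪F' y, v - F' y⟫ := by
    rw [inner_sub_right, real_inner_self_eq_norm_sq]; ring
  have hnorm : ‖v‖ ^ 2 = ‖F' y‖ ^ 2 + 2 * ⟪F' y, v - F' y⟫ + ‖v - F' y‖ ^ 2 := by
    rw [← norm_add_sq_real, add_sub_cancel]
  rw [inner_smul_right, norm_smul, mul_pow, Real.norm_eq_abs, sq_abs, hinner, hnorm] at hdesc
  rw [hstep, hinner, norm_sub_rev]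
  linear_combination hdesc + α * hQ

end Step

section Expectation
variable {Ω E : Type*} {m m0 : MeasurableSpace Ω} {μ : Measure Ω}
  [NormedAddCommGroup E] [InnerProductSpace ℝ E] [CompleteSpace E]

theorem integral_inner_eq_integral_norm_sq_of_condExp_eq (hm : m ≤ m0)
    [SigmaFinite (μ.trim hm)] {f g : Ω → E} (hf : StronglyMeasurable[m] f)
    (hfg : Integrable (fun ω => ⟪f ω, g ω⟫) μ) (hg : Integrable g μ) (hcond : μ[g|m] =ᵐ[μ] f) :
    ∫ ω, ⟪f ω, g ω⟫ ∂μ = ∫ ω, ‖f ω‖ ^ 2 ∂μ := by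
  rw [← integral_condExp hm]
  refine integral_congr_ae ?_
  filter_upwards [condExp_bilin_of_stronglyMeasurable_left (innerSL ℝ) hf hfg hg, hcond]
    with ω hpull hω
  refine hpull.trans ?_
  rw [hω]
  exact real_inner_self_eq_norm_sq _

theorem integral_le_of_ae_condExp_le [IsProbabilityMeasure μ] (hm : m ≤ m0) {f : Ω → ℝ}
    {c : ℝ} (h : ∀ᵐ ω ∂μ, μ[f|m] ω ≤ c) : ∫ ω, f ω ∂μ ≤ c := by
  rw [← integral_condExp hm]
  have := integral_mono_ae integrable_condExp (integrable_const c) h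
  rwa [integral_const, probReal_univ, one_smul] at this

variable {F : E → ℝ} {F' : E → E} {K : ℝ≥0}

theorem integrable_norm_sq_comp_of_lipschitzWith_gradient [IsFiniteMeasure μ]
    (hgrad : ∀ y, HasGradientAt F (F' y) y) (hlip : LipschitzWith K F') (hK : 0 < K)
    {Fstar : ℝ} (hbdd : ∀ y, Fstar ≤ F y) {X : Ω → E} (hX : AEStronglyMeasurable X μ)
    (hFX : Integrable (fun ω => F (X ω)) μ) : Integrable (fun ω => ‖F' (X ω)‖ ^ 2) μ := by
  refine ((hFX.sub (integrable_const Fstar)).const_mul (2 * K)).mono'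
    ((hlip.continuous.comp_aestronglyMeasurable hX).norm.pow 2) (ae_of_all _ fun ω => ?_)
  rw [Real.norm_of_nonneg (sq_nonneg _)]
  exact norm_sq_le_of_lipschitzWith_gradient hgrad hlip hK hbdd (X ω)

theorem integral_comp_add_trishStep_le [IsFiniteMeasure μ] (hm : m ≤ m0)
    (hgrad : ∀ y, HasGradientAt F (F' y) y) (hlip : LipschitzWith K F') (hK : 0 < K)
    {Fstar : ℝ} (hbdd : ∀ y, Fstar ≤ F y) {α γ₁ γ₂ β : ℝ} (hα : 0 < α) (hγ₂ : 0 < γ₂)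
    (hγ : γ₂ ≤ γ₁) (hsmall : 2 * (K * α) * γ₁ ^ 2 ≤ γ₂)
    (hβ : (γ₁ ^ 2 - γ₂ ^ 2) / (2 * γ₂) + K * α * γ₁ ^ 2 / 2 ≤ β)
    {X G : Ω → E} (hX : StronglyMeasurable[m] X) (hG : Integrable G μ)
    (hcond : μ[G|m] =ᵐ[μ] fun ω => F' (X ω)) (hFX : Integrable (fun ω => F (X ω)) μ)
    (hFX' : Integrable (fun ω => F (X ω + trishStep α γ₁ γ₂ (G ω))) μ)
    (hnoise : Integrable (fun ω => ‖F' (X ω) - G ω‖ ^ 2) μ) :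
    ∫ ω, F (X ω + trishStep α γ₁ γ₂ (G ω)) ∂μ
      ≤ ∫ ω, F (X ω) ∂μ - γ₂ * α / 2 * ∫ ω, ‖F' (X ω)‖ ^ 2 ∂μ
        + α * β * ∫ ω, ‖F' (X ω) - G ω‖ ^ 2 ∂μ := by
  have hf : StronglyMeasurable[m] fun ω => F' (X ω) := hlip.continuous.comp_stronglyMeasurable hX
  have hf_ae : AEStronglyMeasurable (fun ω => F' (X ω)) μ := (hf.mono hm).aestronglyMeasurable
  have hf_sq := integrable_norm_sq_comp_of_lipschitzWith_gradient hgrad hlip hK hbdd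
    (hX.mono hm).aestronglyMeasurable hFX
  have hf2 : MemLp (fun ω => F' (X ω)) 2 μ := (memLp_two_iff_integrable_sq_norm hf_ae).2 hf_sq
  have hG2 : MemLp G 2 μ := by
    simpa using hf2.sub ((memLp_two_iff_integrable_sq_norm (hf_ae.sub hG.1)).2 hnoise)
  have hinner : Integrable (fun ω => ⟪F' (X ω), G ω⟫) μ :=
    memLp_one_iff_integrable.1 ((innerSL ℝ).memLp_of_bilin 1 hf2 hG2)
  have hunbiased := integral_inner_eq_integral_norm_sq_of_condExp_eq hm hf hinner hG hcond
  set θ := (γ₁ + γ₂ - K * α * (γ₁ ^ 2 + γ₂ ^ 2)) / 2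
  have hB := (hf_sq.sub hinner).const_mul (θ * α)
  have hC := hf_sq.const_mul (γ₂ * α / 2)
  have hD := hnoise.const_mul (α * β)
  calc ∫ ω, F (X ω + trishStep α γ₁ γ₂ (G ω)) ∂μ
      ≤ ∫ ω, (F (X ω) + θ * α * (‖F' (X ω)‖ ^ 2 - ⟪F' (X ω), G ω⟫)
          - γ₂ * α / 2 * ‖F' (X ω)‖ ^ 2 + α * β * ‖F' (X ω) - G ω‖ ^ 2) ∂μ :=
        integral_mono hFX' (((hFX.add hB).sub hC).add hD)
          fun ω => apply_add_trishStep_le hgrad hlip hα hγ₂ hγ hsmall hβ _ _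
    _ = _ := by
        rw [integral_add, integral_sub, integral_add, integral_const_mul, integral_const_mul,
          integral_const_mul, integral_sub hf_sq hinner, hunbiased, sub_self, mul_zero, add_zero]
        exacts [hFX, hB, hFX.add hB, hC, (hFX.add hB).sub hC, hD]

theorem integral_comp_add_trishStep_sub_le [IsProbabilityMeasure μ] (hm : m ≤ m0)
    (hgrad : ∀ y, HasGradientAt F (F' y) y) (hlip : LipschitzWith K F') (hK : 0 < K)
    {Fstar μpl : ℝ} (hbdd : ∀ y, Fstar ≤ F y) (hPL : ∀ y, 2 * μpl * (F y - Fstar) ≤ ‖F' y‖ ^ 2)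
    {α γ₁ γ₂ β Mg : ℝ} (hα : 0 < α) (hγ₂ : 0 < γ₂)
    (hγ : γ₂ ≤ γ₁) (hsmall : 2 * (K * α) * γ₁ ^ 2 ≤ γ₂)
    (hβ : (γ₁ ^ 2 - γ₂ ^ 2) / (2 * γ₂) + K * α * γ₁ ^ 2 / 2 ≤ β)
    {X G : Ω → E} (hX : StronglyMeasurable[m] X) (hG : Integrable G μ)
    (hcond : μ[G|m] =ᵐ[μ] fun ω => F' (X ω)) (hFX : Integrable (fun ω => F (X ω)) μ)
    (hFX' : Integrable (fun ω => F (X ω + trishStep α γ₁ γ₂ (G ω))) μ)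
    (hnoise : Integrable (fun ω => ‖F' (X ω) - G ω‖ ^ 2) μ)
    (hMg : ∫ ω, ‖F' (X ω) - G ω‖ ^ 2 ∂μ ≤ Mg) :
    ∫ ω, F (X ω + trishStep α γ₁ γ₂ (G ω)) ∂μ - Fstar
      ≤ (1 - α * μpl * γ₂) * (∫ ω, F (X ω) ∂μ - Fstar) + α * β * Mg := by
  have hdesc := integral_comp_add_trishStep_le hm hgrad hlip hK hbdd hα hγ₂ hγ hsmall hβ hX hG
    hcond hFX hFX' hnoise
  have hPL' : 2 * μpl * (∫ ω, F (X ω) ∂μ - Fstar) ≤ ∫ ω, ‖F' (X ω)‖ ^ 2 ∂μ := by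
    have hsq := integrable_norm_sq_comp_of_lipschitzWith_gradient hgrad hlip hK hbdd
      (hX.mono hm).aestronglyMeasurable hFX
    calc 2 * μpl * (∫ ω, F (X ω) ∂μ - Fstar) = ∫ ω, 2 * μpl * (F (X ω) - Fstar) ∂μ := by
          rw [integral_const_mul, integral_sub hFX (integrable_const _), integral_const,
            probReal_univ, one_smul]
      _ ≤ ∫ ω, ‖F' (X ω)‖ ^ 2 ∂μ :=
          integral_mono ((hFX.sub (integrable_const _)).const_mul _) hsq fun ω => hPL (X ω)
  have hβ₀ := trish_beta_nonneg (by positivity) hγ₂ hγ hβ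
  linear_combination hdesc + γ₂ * α / 2 * hPL' + α * β * hMg

end Expectation

theorem le_pow_mul_add_of_le_mul_add {e : ℕ → ℝ} {r B : ℝ} (hr : 0 ≤ r) (hB : 0 ≤ B)
    (h : ∀ k, e (k + 1) ≤ r * e k + (1 - r) * B) (k : ℕ) : e k ≤ r ^ k * e 0 + B := by
  induction k with
  | zero => simpa using hB
  | succ k ih =>
    calc e (k + 1) ≤ r * e k + (1 - r) * B := h k
      _ ≤ r * (r ^ k * e 0 + B) + (1 - r) * B := by gcongr
      _ = r ^ (k + 1) * e 0 + B := by ring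

theorem le_pow_mul_add_of_le_one_sub_mul_add {e : ℕ → ℝ} {a b : ℝ} (he : ∀ k, 0 ≤ e k)
    (ha₀ : 0 < a) (ha₁ : a ≤ 2) (hb : 0 ≤ b) (h : ∀ k, e (k + 1) ≤ (1 - a) * e k + b) (k : ℕ) :
    e k ≤ (1 - a / 2) ^ k * e 0 + 2 * b / a := by
  refine le_pow_mul_add_of_le_mul_add (by linarith) (by positivity) (fun k => ?_) k
  have hb' : (1 - (1 - a / 2)) * (2 * b / a) = b := by field_simp; ring
  rw [hb']
  nlinarith [h k, he k]

theorem limsup_le_of_le_pow_mul_add {u : ℕ → ℝ} {a r C B : ℝ} (hr₀ : 0 ≤ r) (hr₁ : r < 1)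
    (ha : ∀ k, a ≤ u k) (hu : ∀ k, u k ≤ r ^ k * C + B) : Filter.limsup u Filter.atTop ≤ B := by
  have hlim : Filter.Tendsto (fun k => r ^ k * C + B) Filter.atTop (nhds B) := by
    simpa using ((tendsto_pow_atTop_nhds_zero_of_lt_one hr₀ hr₁).mul_const C).add_const B
  calc Filter.limsup u Filter.atTop ≤ Filter.limsup (fun k => r ^ k * C + B) Filter.atTop :=
        Filter.limsup_le_limsup (Filter.Eventually.of_forall hu)
          (Filter.isCoboundedUnder_le_of_le Filter.atTop ha) hlim.isBoundedUnder_le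
    _ = B := hlim.limsup_eq

theorem stmt_11 {n : ℕ} (F : EuclideanSpace ℝ (Fin n) → ℝ)
    (F' : EuclideanSpace ℝ (Fin n) → EuclideanSpace ℝ (Fin n))
    (L Fstar μpl : ℝ) (hL : 0 < L) (hμ : 0 < μpl)
    (hgrad : ∀ y, HasGradientAt F (F' y) y)
    (hlip : LipschitzWith (Real.toNNReal L) F')
    (hbdd : ∀ y, Fstar ≤ F y)
    (hPL : ∀ y, ‖F' y‖ ^ 2 ≥ 2 * μpl * (F y - Fstar))
    (α γ₁ γ₂ β Mg : ℝ) (hα : 0 < α) (hγ₂ : 0 < γ₂) (hγ : γ₂ < γ₁) (hMg : 0 < Mg)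
    (hαlt : α < min (γ₂ / (2 * γ₁ ^ 2 * L)) (1 / (μpl * γ₂)))
    (hβ : β = (γ₁ ^ 2 - γ₂ ^ 2) / (2 * γ₂) + (1 / 2) * α * γ₁ ^ 2 * L)
    {Ω : Type*} {m0 : MeasurableSpace Ω} (μ : Measure Ω) [IsProbabilityMeasure μ]
    (ℱ : Filtration ℕ m0)
    (x g : ℕ → Ω → EuclideanSpace ℝ (Fin n))
    (x₀ : EuclideanSpace ℝ (Fin n)) (hx₀ : ∀ ω, x 0 ω = x₀)
    (hadapted : Adapted ℱ x)
    (hstep : ∀ k ω, x (k + 1) ω = x k ω +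
      (if ‖g k ω‖ < 1 / γ₁ then (-(γ₁ * α)) • g k ω
       else if ‖g k ω‖ ≤ 1 / γ₂ then (-(α / ‖g k ω‖)) • g k ω
       else (-(γ₂ * α)) • g k ω))
    (hintg : ∀ k, Integrable (g k) μ)
    (hintF : ∀ k, Integrable (fun ω => F (x k ω)) μ)
    (hint2 : ∀ k, Integrable (fun ω => ‖F' (x k ω) - g k ω‖ ^ 2) μ)
    (hunbiased : ∀ k, μ[g k | ℱ k] =ᵐ[μ] fun ω => F' (x k ω))
    (hvar : ∀ k, ∀ᵐ ω ∂μ, (μ[fun ω' => ‖F' (x k ω') - g k ω'‖ ^ 2 | ℱ k]) ω < Mg) :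
    (∀ k : ℕ, (∫ ω, F (x (k + 1) ω) ∂μ) - Fstar ≤
        (1 - (1 / 2) * α * μpl * γ₂) ^ (k + 1) * (F x₀ - Fstar)
          + 2 * β * Mg / (μpl * γ₂)) ∧
      Filter.limsup (fun k => (∫ ω, F (x (k + 1) ω) ∂μ) - Fstar) Filter.atTop ≤
        2 * β * Mg / (μpl * γ₂) := by
  have hγ₁ : 0 < γ₁ := hγ₂.trans hγ
  have hK : 0 < L.toNNReal := Real.toNNReal_pos.2 hL
  have hKL : (L.toNNReal : ℝ) = L := Real.coe_toNNReal L hL.le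
  obtain ⟨hα₁, hα₂⟩ := lt_min_iff.1 hαlt
  rw [lt_div_iff₀ (by positivity)] at hα₁ hα₂
  have hsmall : 2 * (L.toNNReal * α) * γ₁ ^ 2 ≤ γ₂ := by rw [hKL]; linarith
  have hβ' : (γ₁ ^ 2 - γ₂ ^ 2) / (2 * γ₂) + L.toNNReal * α * γ₁ ^ 2 / 2 ≤ β := by
    rw [hKL, hβ]; linarith
  have hrec : ∀ k, ∫ ω, F (x (k + 1) ω) ∂μ - Fstar
      ≤ (1 - α * μpl * γ₂) * (∫ ω, F (x k ω) ∂μ - Fstar) + α * β * Mg := fun k => by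
    have hx : x (k + 1) = fun ω => x k ω + trishStep α γ₁ γ₂ (g k ω) := funext (hstep k)
    have hFx := hintF (k + 1)
    rw [hx] at hFx ⊢
    exact integral_comp_add_trishStep_sub_le (ℱ.le k) hgrad hlip hK hbdd hPL hα hγ₂ hγ.le hsmall
      hβ' (hadapted k).stronglyMeasurable (hintg k) (hunbiased k) (hintF k) hFx (hint2 k)
      (integral_le_of_ae_condExp_le (ℱ.le k) ((hvar k).mono fun _ h => h.le))
  have hgap : ∀ k, 0 ≤ ∫ ω, F (x k ω) ∂μ - Fstar := fun k => sub_nonneg.2 <| by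
    simpa using integral_mono (integrable_const Fstar) (hintF k) fun ω => hbdd (x k ω)
  have hαμγ : 0 < α * μpl * γ₂ := by positivity
  have hbound := le_pow_mul_add_of_le_one_sub_mul_add hgap hαμγ (by linarith)
    (mul_nonneg (mul_nonneg hα.le (trish_beta_nonneg (by positivity) hγ₂ hγ.le hβ')) hMg.le) hrec
  have hrate : 1 - α * μpl * γ₂ / 2 = 1 - 1 / 2 * α * μpl * γ₂ := by ring
  have hB : 2 * (α * β * Mg) / (α * μpl * γ₂) = 2 * β * Mg / (μpl * γ₂) := by field_simp
  simp only [hrate, hB, hx₀, integral_const, probReal_univ, one_smul] at hbound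
  refine ⟨fun k => hbound (k + 1), limsup_le_of_le_pow_mul_add (r := 1 - 1 / 2 * α * μpl * γ₂)
    (C := (1 - 1 / 2 * α * μpl * γ₂) * (F x₀ - Fstar)) (by linarith) (by linarith)
    (fun k => hgap (k + 1)) fun k => ?_⟩
  rw [← mul_assoc, ← pow_succ]
  exact hbound (k + 1)
end

section
/- Let $F : \mathbb{R}^n \to \mathbb{R}$ be differentiable with $L$-Lipschitz gradient and bounded below by $F_*$. Let $0 < \gamma_2 < \gamma_1$ with $(\gamma_2/\gamma_1)^2 > 1 - \frac{1}{4M_2}$ and $\alpha < \frac{1}{4\gamma_2 L M_2}$. Let $(x_k)$ be TRish iterates with $\mathbb{E}_k[g_k] = \nabla F(x_k)$ and $\mathbb{E}_k[\|g_k\|^2] \le M_2\|\nabla F(x_k)\|^2$. Then for every $K \ge 1$, $\mathbb{E}\left[\frac{1}{K}\sum_{k=1}^K \|\nabla F(x_k)\|^2\right] \le \frac{4\gamma_2 (F(x_1) - F_*)}{K \alpha \gamma_1^2}$, and in particular the average expected squared gradient norm tends to $0$ as $K \to \infty$. -/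
/-!
Each TRish step is `-β • g` with `γ₂ α ≤ β ≤ γ₁ α`, so the descent lemma for the `L`-smooth `F`
bounds `F (x_{k+1})` by `F (x_k) - γ₂ α ⟪∇F, g⟫ + (γ₁ - γ₂) α ‖∇F‖ ‖g‖ + L/2 (γ₁ α)² ‖g‖²`.
In expectation, unbiasedness turns `⟪∇F, g⟫` into `‖∇F‖²`, the second-moment bound gives
`E ‖g‖² ≤ M₂ E ‖∇F‖²`, and Young's inequality then gives `E ‖∇F‖ ‖g‖ ≤ √M₂ E ‖∇F‖²`.
The conditions on `γ₂ / γ₁` and `α` make the total coefficient of `E ‖∇F‖²` at most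
`-α γ₁² / (4 γ₂)`; telescoping against `F ≥ Fstar` gives the bound.
-/

open MeasureTheory Set
open scoped RealInnerProductSpace

theorem trish_step_eq_neg_smul {E : Type*} [NormedAddCommGroup E] [NormedSpace ℝ E]
    {α γ₁ γ₂ : ℝ} (hα : 0 ≤ α) (hγ₂ : 0 < γ₂) (hγ : γ₂ ≤ γ₁) (g : E) :
    ∃ β, γ₂ * α ≤ β ∧ β ≤ γ₁ * α ∧
      (if ‖g‖ < 1 / γ₁ then (-(γ₁ * α)) • g
       else if ‖g‖ ≤ 1 / γ₂ then (-(α / ‖g‖)) • g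
       else (-(γ₂ * α)) • g) = (-β) • g := by
  have hγ₁ : 0 < γ₁ := hγ₂.trans_le hγ
  split_ifs with hsmall hmid
  · exact ⟨γ₁ * α, by gcongr, le_rfl, rfl⟩
  · have hg : 0 < ‖g‖ := lt_of_lt_of_le (by positivity) (not_lt.1 hsmall)
    refine ⟨α / ‖g‖, ?_, ?_, rfl⟩
    · rw [le_div_iff₀ hg]
      calc γ₂ * α * ‖g‖ ≤ γ₂ * α * (1 / γ₂) := by gcongr
        _ = α := by field_simp
    · rw [div_le_iff₀ hg]
      calc α = γ₁ * α * (1 / γ₁) := by field_simp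
        _ ≤ γ₁ * α * ‖g‖ := by gcongr; exact not_lt.1 hsmall
  · exact ⟨γ₂ * α, le_rfl, by gcongr, rfl⟩

theorem inner_neg_smul_add_norm_sq_le {E : Type*} [NormedAddCommGroup E] [InnerProductSpace ℝ E]
    (v w : E) {L a b β : ℝ} (hL : 0 ≤ L) (ha : 0 ≤ a) (haβ : a ≤ β) (hβb : β ≤ b) :
    ⟪v, (-β) • w⟫ + L / 2 * ‖(-β) • w‖ ^ 2 ≤
      -a * ⟪v, w⟫ + (b - a) * (‖v‖ * ‖w‖) + L / 2 * b ^ 2 * ‖w‖ ^ 2 := by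
  rw [real_inner_smul_right, norm_smul, mul_pow, Real.norm_eq_abs, sq_abs]
  have hvw := neg_le_of_abs_le (abs_real_inner_le_norm v w)
  have hsq : β ^ 2 ≤ b ^ 2 := pow_le_pow_left₀ (ha.trans haβ) hβb 2
  nlinarith [mul_le_mul_of_nonneg_left hsq (mul_nonneg hL (sq_nonneg ‖w‖)),
    mul_nonneg (sub_nonneg.2 haβ) (by linarith : 0 ≤ ⟪v, w⟫ + ‖v‖ * ‖w‖),
    mul_nonneg (sub_nonneg.2 hβb) (mul_nonneg (norm_nonneg v) (norm_nonneg w))]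

section Smooth

variable {E : Type*} [NormedAddCommGroup E] [InnerProductSpace ℝ E] [CompleteSpace E]

theorem apply_add_le_of_lipschitzWith_gradient {F : E → ℝ} {F' : E → E} {L : ℝ} (hL : 0 ≤ L)
    (hgrad : ∀ y, HasGradientAt F (F' y) y) (hlip : LipschitzWith (Real.toNNReal L) F')
    (x p : E) : F (x + p) ≤ F x + ⟪F' x, p⟫ + L / 2 * ‖p‖ ^ 2 := by
  have hline : ∀ t : ℝ, HasDerivAt (fun t : ℝ => F (x + t • p)) ⟪F' (x + t • p), p⟫ t := by
    intro t
    have hx : HasDerivAt (fun t : ℝ => x + t • p) p t := by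
      simpa using ((hasDerivAt_id t).smul_const p).const_add x
    exact (hgrad _).hasFDerivAt.comp_hasDerivAt t hx
  have hgap : ∀ t : ℝ, HasDerivAt
      (fun t : ℝ => F x + t * ⟪F' x, p⟫ + L / 2 * t ^ 2 * ‖p‖ ^ 2 - F (x + t • p))
      (⟪F' x, p⟫ + L * t * ‖p‖ ^ 2 - ⟪F' (x + t • p), p⟫) t := by
    intro t
    have hquad := (((hasDerivAt_id' t).mul_const ⟪F' x, p⟫).const_add (F x)).add
      (((hasDerivAt_pow 2 t).const_mul (L / 2)).mul_const (‖p‖ ^ 2))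
    exact (hquad.sub (hline t)).congr_deriv (by simp only [Nat.cast_ofNat]; ring)
  have hmono : MonotoneOn
      (fun t : ℝ => F x + t * ⟪F' x, p⟫ + L / 2 * t ^ 2 * ‖p‖ ^ 2 - F (x + t • p)) (Ici 0) := by
    refine monotoneOn_of_hasDerivWithinAt_nonneg (convex_Ici 0)
      (fun t _ => (hgap t).continuousAt.continuousWithinAt)
      (fun t _ => (hgap t).hasDerivWithinAt) fun t ht => ?_
    rw [interior_Ici, mem_Ioi] at ht
    have hlipt : ‖F' (x + t • p) - F' x‖ ≤ L * (t * ‖p‖) := by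
      simpa [← dist_eq_norm, norm_smul, abs_of_pos ht, Real.coe_toNNReal _ hL]
        using hlip.dist_le_mul (x + t • p) x
    have hcs := real_inner_le_norm (F' (x + t • p) - F' x) p
    rw [inner_sub_left] at hcs
    nlinarith [mul_le_mul_of_nonneg_right hlipt (norm_nonneg p)]
  simpa using hmono self_mem_Ici (mem_Ici.2 zero_le_one) zero_le_one

theorem trish_descent {F : E → ℝ} {F' : E → E} {L α γ₁ γ₂ : ℝ} (hL : 0 ≤ L)
    (hgrad : ∀ y, HasGradientAt F (F' y) y) (hlip : LipschitzWith (Real.toNNReal L) F')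
    (hα : 0 ≤ α) (hγ₂ : 0 < γ₂) (hγ : γ₂ ≤ γ₁) (x g : E) :
    F (x + (if ‖g‖ < 1 / γ₁ then (-(γ₁ * α)) • g
        else if ‖g‖ ≤ 1 / γ₂ then (-(α / ‖g‖)) • g
        else (-(γ₂ * α)) • g)) ≤
      F x + (-(γ₂ * α) * ⟪F' x, g⟫ + (γ₁ * α - γ₂ * α) * (‖F' x‖ * ‖g‖) +
        L / 2 * (γ₁ * α) ^ 2 * ‖g‖ ^ 2) := by
  obtain ⟨β, hβ₂, hβ₁, hstep⟩ := trish_step_eq_neg_smul hα hγ₂ hγ g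
  rw [hstep]
  linarith [apply_add_le_of_lipschitzWith_gradient hL hgrad hlip x ((-β) • g),
    inner_neg_smul_add_norm_sq_le (F' x) g hL (by positivity) hβ₂ hβ₁]

end Smooth

theorem trish_rate_le {L α γ₁ γ₂ M₂ : ℝ} (hL : 0 < L) (hγ₂ : 0 < γ₂) (hγ : γ₂ < γ₁)
    (hM₂ : 1 ≤ M₂) (hratio : (γ₂ / γ₁) ^ 2 > 1 - 1 / (4 * M₂))
    (hαlt : α < 1 / (4 * γ₂ * L * M₂)) :
    γ₁ ^ 2 / (4 * γ₂) ≤ γ₂ - (γ₁ - γ₂) * √M₂ - L / 2 * γ₁ ^ 2 * α * M₂ := by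
  have hγ₁ : 0 < γ₁ := hγ₂.trans hγ
  set s := √M₂
  have hs1 : 1 ≤ s := Real.one_le_sqrt.2 hM₂
  have hs2 : s ^ 2 = M₂ := Real.sq_sqrt (by linarith)
  have hratio' : (1 - 1 / (4 * M₂)) * γ₁ ^ 2 < γ₂ ^ 2 := by
    rwa [div_pow, gt_iff_lt, lt_div_iff₀ (by positivity)] at hratio
  have hgap : 4 * s ^ 2 * (γ₁ ^ 2 - γ₂ ^ 2) < γ₁ ^ 2 := by
    have h := mul_lt_mul_of_pos_left hratio' (by positivity : (0 : ℝ) < 4 * M₂)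
    rw [show 4 * M₂ * ((1 - 1 / (4 * M₂)) * γ₁ ^ 2) = 4 * M₂ * γ₁ ^ 2 - γ₁ ^ 2 by
      field_simp] at h
    rw [hs2]
    linarith
  have hγ₂_sq : 3 * γ₁ ^ 2 < 4 * γ₂ ^ 2 := by nlinarith
  have hdrift : 4 * γ₂ * (γ₁ - γ₂) * s ≤ γ₁ ^ 2 := by
    have : 0 ≤ γ₂ * (γ₁ - γ₂) := by nlinarith
    nlinarith [mul_le_mul_of_nonneg_left hs1 (mul_nonneg this (by linarith : (0 : ℝ) ≤ s))]
  have hnoise : 2 * L * γ₁ ^ 2 * α * M₂ * γ₂ < γ₁ ^ 2 / 2 := by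
    rw [lt_div_iff₀ (by positivity)] at hαlt
    nlinarith [sq_pos_of_pos hγ₁]
  -- `4 γ₂` times the right-hand side exceeds `3 γ₁² - γ₁² - γ₁² / 2`
  rw [div_le_iff₀ (by positivity)]
  nlinarith

theorem trish_gain_le {L α γ₁ γ₂ M₂ A B C : ℝ} (hL : 0 < L) (hα : 0 < α) (hγ₂ : 0 < γ₂)
    (hγ : γ₂ < γ₁) (hratio : (γ₂ / γ₁) ^ 2 > 1 - 1 / (4 * M₂))
    (hαlt : α < 1 / (4 * γ₂ * L * M₂))
    (hA : 0 ≤ A) (hAC : A ≤ C) (hCA : C ≤ √M₂ * A) (hBA : B ≤ M₂ * A) :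
    -(γ₂ * α) * A + (γ₁ * α - γ₂ * α) * C + L / 2 * (γ₁ * α) ^ 2 * B ≤
      -(α * γ₁ ^ 2 / (4 * γ₂) * A) := by
  have hdrift : 0 ≤ γ₁ * α - γ₂ * α := by nlinarith
  have hnoise : 0 ≤ L / 2 * (γ₁ * α) ^ 2 := by positivity
  rcases le_or_gt 1 M₂ with hM₂ | hM₂
  · have hrate := trish_rate_le hL hγ₂ hγ hM₂ hratio hαlt
    have hrateA := mul_le_mul_of_nonneg_left hrate (mul_nonneg hα.le hA)
    linear_combination mul_le_mul_of_nonneg_left hCA hdrift +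
      mul_le_mul_of_nonneg_left hBA hnoise + hrateA
  · -- Here `A ≤ C ≤ √M₂ * A` with `√M₂ < 1` forces `A = 0`.
    have hs : √M₂ < 1 := (Real.sqrt_lt' one_pos).2 (by linarith)
    have hA0 : A = 0 := by nlinarith
    subst hA0
    linarith [mul_le_mul_of_nonneg_left hCA hdrift, mul_le_mul_of_nonneg_left hBA hnoise]

section Stochastic

variable {Ω E : Type*} [NormedAddCommGroup E] {m m0 : MeasurableSpace Ω} {μ : Measure Ω}

theorem integrable_of_abs_le_norm_mul_norm {f g : Ω → E} {h : Ω → ℝ}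
    (hh : AEStronglyMeasurable h μ) (hf : Integrable (fun ω => ‖f ω‖ ^ 2) μ)
    (hg : Integrable (fun ω => ‖g ω‖ ^ 2) μ) (hle : ∀ ω, |h ω| ≤ ‖f ω‖ * ‖g ω‖) :
    Integrable h μ :=
  ((hf.add hg).div_const 2).mono' hh <| ae_of_all _ fun ω =>
    by simp only [Pi.add_apply, Real.norm_eq_abs]; nlinarith [hle ω, sq_nonneg (‖f ω‖ - ‖g ω‖)]

theorem integral_le_of_condExp_le (hm : m ≤ m0) [SigmaFinite (μ.trim hm)] {f h : Ω → ℝ}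
    (hh : Integrable h μ) (hfh : μ[f | m] ≤ᵐ[μ] h) : ∫ ω, f ω ∂μ ≤ ∫ ω, h ω ∂μ := by
  rw [← integral_condExp hm]
  exact integral_mono_ae integrable_condExp hh hfh

theorem integral_mul_le_sqrt_mul_integral_sq {a b : Ω → ℝ}
    (hab : Integrable (fun ω => a ω * b ω) μ) (ha : Integrable (fun ω => a ω ^ 2) μ)
    (hb : Integrable (fun ω => b ω ^ 2) μ) {M : ℝ} (hM : 0 < M)
    (hba : ∫ ω, b ω ^ 2 ∂μ ≤ M * ∫ ω, a ω ^ 2 ∂μ) :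
    ∫ ω, a ω * b ω ∂μ ≤ √M * ∫ ω, a ω ^ 2 ∂μ := by
  set s := √M
  have hs : 0 < s := Real.sqrt_pos.2 hM
  -- Young's inequality, with the weight `s = √M` that balances its two terms once `∫ b² ≤ s² ∫ a²`
  have hyoung : ∀ ω, a ω * b ω ≤ (s * a ω ^ 2 + b ω ^ 2 / s) / 2 := fun ω => by
    have hsq : (s * a ω ^ 2 + b ω ^ 2 / s) / 2 - a ω * b ω = (s * a ω - b ω) ^ 2 / (2 * s) := by
      field_simp
      ring
    linarith [div_nonneg (sq_nonneg (s * a ω - b ω)) (by positivity : (0 : ℝ) ≤ 2 * s)]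
  have hs2 : s ^ 2 = M := Real.sq_sqrt hM.le
  calc ∫ ω, a ω * b ω ∂μ ≤ ∫ ω, (s * a ω ^ 2 + b ω ^ 2 / s) / 2 ∂μ :=
        integral_mono hab (((ha.const_mul s).add (hb.div_const s)).div_const 2) hyoung
    _ = (s * ∫ ω, a ω ^ 2 ∂μ + (∫ ω, b ω ^ 2 ∂μ) / s) / 2 := by
        rw [integral_div, integral_add (ha.const_mul s) (hb.div_const s), integral_const_mul,
          integral_div]
    _ ≤ (s * ∫ ω, a ω ^ 2 ∂μ + (s ^ 2 * ∫ ω, a ω ^ 2 ∂μ) / s) / 2 := by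
        rw [hs2]; gcongr
    _ = s * ∫ ω, a ω ^ 2 ∂μ := by field_simp; ring

variable [InnerProductSpace ℝ E]

theorem integral_inner_eq_integral_norm_sq_of_condExp [CompleteSpace E] (hm : m ≤ m0)
    [SigmaFinite (μ.trim hm)] {f g : Ω → E} (hf : StronglyMeasurable[m] f)
    (hfg : Integrable (fun ω => ⟪f ω, g ω⟫) μ) (hg : Integrable g μ) (hgf : μ[g | m] =ᵐ[μ] f) :
    ∫ ω, ⟪f ω, g ω⟫ ∂μ = ∫ ω, ‖f ω‖ ^ 2 ∂μ := by
  have hpull : μ[fun ω => ⟪f ω, g ω⟫ | m] =ᵐ[μ] fun ω => ⟪f ω, f ω⟫ :=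
    (condExp_bilin_of_stronglyMeasurable_left (innerSL ℝ) hf hfg hg).trans <|
      hgf.mono fun ω hω => by simp only [hω]; rfl
  rw [← integral_condExp hm, integral_congr_ae hpull]
  simp only [real_inner_self_eq_norm_sq]

end Stochastic

theorem integral_trish_step_le {Ω E : Type*} [NormedAddCommGroup E] [InnerProductSpace ℝ E]
    [CompleteSpace E] {m0 : MeasurableSpace Ω} {μ : Measure Ω}
    {F : E → ℝ} {F' : E → E} {L α γ₁ γ₂ : ℝ} (hL : 0 ≤ L)
    (hgrad : ∀ y, HasGradientAt F (F' y) y) (hlip : LipschitzWith (Real.toNNReal L) F')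
    (hα : 0 ≤ α) (hγ₂ : 0 < γ₂) (hγ : γ₂ ≤ γ₁) {X X' G : Ω → E}
    (hX' : ∀ ω, X' ω = X ω +
      (if ‖G ω‖ < 1 / γ₁ then (-(γ₁ * α)) • G ω
       else if ‖G ω‖ ≤ 1 / γ₂ then (-(α / ‖G ω‖)) • G ω
       else (-(γ₂ * α)) • G ω))
    (hFX : Integrable (fun ω => F (X ω)) μ) (hFX' : Integrable (fun ω => F (X' ω)) μ)
    (hinner : Integrable (fun ω => ⟪F' (X ω), G ω⟫) μ)
    (hnorms : Integrable (fun ω => ‖F' (X ω)‖ * ‖G ω‖) μ)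
    (hG2 : Integrable (fun ω => ‖G ω‖ ^ 2) μ) :
    ∫ ω, F (X' ω) ∂μ ≤ ∫ ω, F (X ω) ∂μ +
      (-(γ₂ * α) * ∫ ω, ⟪F' (X ω), G ω⟫ ∂μ +
        (γ₁ * α - γ₂ * α) * ∫ ω, ‖F' (X ω)‖ * ‖G ω‖ ∂μ +
        L / 2 * (γ₁ * α) ^ 2 * ∫ ω, ‖G ω‖ ^ 2 ∂μ) := by
  have hpair : Integrable (fun ω => -(γ₂ * α) * ⟪F' (X ω), G ω⟫ +
      (γ₁ * α - γ₂ * α) * (‖F' (X ω)‖ * ‖G ω‖)) μ :=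
    (hinner.const_mul _).add (hnorms.const_mul _)
  have hgain : Integrable (fun ω => -(γ₂ * α) * ⟪F' (X ω), G ω⟫ +
      (γ₁ * α - γ₂ * α) * (‖F' (X ω)‖ * ‖G ω‖) + L / 2 * (γ₁ * α) ^ 2 * ‖G ω‖ ^ 2) μ :=
    hpair.add (hG2.const_mul _)
  calc ∫ ω, F (X' ω) ∂μ
      ≤ ∫ ω, F (X ω) + (-(γ₂ * α) * ⟪F' (X ω), G ω⟫ +
        (γ₁ * α - γ₂ * α) * (‖F' (X ω)‖ * ‖G ω‖) + L / 2 * (γ₁ * α) ^ 2 * ‖G ω‖ ^ 2) ∂μ :=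
        integral_mono hFX' (hFX.add hgain) fun ω =>
          (hX' ω).symm ▸ trish_descent hL hgrad hlip hα hγ₂ hγ (X ω) (G ω)
    _ = _ := by
        rw [integral_add hFX hgain, integral_add hpair (hG2.const_mul _),
          integral_add (hinner.const_mul _) (hnorms.const_mul _), integral_const_mul,
          integral_const_mul, integral_const_mul]

theorem integral_trish_step_add_le {Ω E : Type*} [NormedAddCommGroup E] [InnerProductSpace ℝ E]
    [CompleteSpace E] {m m0 : MeasurableSpace Ω} {μ : Measure Ω}
    {F : E → ℝ} {F' : E → E} {L α γ₁ γ₂ M₂ : ℝ} (hL : 0 < L)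
    (hgrad : ∀ y, HasGradientAt F (F' y) y) (hlip : LipschitzWith (Real.toNNReal L) F')
    (hα : 0 < α) (hγ₂ : 0 < γ₂) (hγ : γ₂ < γ₁) (hM₂ : 0 < M₂)
    (hratio : (γ₂ / γ₁) ^ 2 > 1 - 1 / (4 * M₂)) (hαlt : α < 1 / (4 * γ₂ * L * M₂))
    (hm : m ≤ m0) [SigmaFinite (μ.trim hm)] {X X' G : Ω → E} (hX : StronglyMeasurable[m] X)
    (hX' : ∀ ω, X' ω = X ω +
      (if ‖G ω‖ < 1 / γ₁ then (-(γ₁ * α)) • G ω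
       else if ‖G ω‖ ≤ 1 / γ₂ then (-(α / ‖G ω‖)) • G ω
       else (-(γ₂ * α)) • G ω))
    (hG : Integrable G μ) (hFX : Integrable (fun ω => F (X ω)) μ)
    (hFX' : Integrable (fun ω => F (X' ω)) μ) (hG2 : Integrable (fun ω => ‖G ω‖ ^ 2) μ)
    (hF'X2 : Integrable (fun ω => ‖F' (X ω)‖ ^ 2) μ)
    (hunbiased : μ[G | m] =ᵐ[μ] fun ω => F' (X ω))
    (hvar : ∀ᵐ ω ∂μ, (μ[fun ω' => ‖G ω'‖ ^ 2 | m]) ω ≤ M₂ * ‖F' (X ω)‖ ^ 2) :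
    ∫ ω, F (X' ω) ∂μ + α * γ₁ ^ 2 / (4 * γ₂) * ∫ ω, ‖F' (X ω)‖ ^ 2 ∂μ ≤ ∫ ω, F (X ω) ∂μ := by
  have hv : StronglyMeasurable[m] fun ω => F' (X ω) := hlip.continuous.comp_stronglyMeasurable hX
  have hvμ : AEStronglyMeasurable (fun ω => F' (X ω)) μ := (hv.mono hm).aestronglyMeasurable
  have hinner : Integrable (fun ω => ⟪F' (X ω), G ω⟫) μ :=
    integrable_of_abs_le_norm_mul_norm (hvμ.inner hG.1) hF'X2 hG2
      fun ω => abs_real_inner_le_norm _ _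
  have hnorms : Integrable (fun ω => ‖F' (X ω)‖ * ‖G ω‖) μ :=
    integrable_of_abs_le_norm_mul_norm (hvμ.norm.mul hG.1.norm) hF'X2 hG2
      fun ω => (abs_of_nonneg (by positivity)).le
  have hI := integral_inner_eq_integral_norm_sq_of_condExp hm hv hinner hG hunbiased
  have hB : ∫ ω, ‖G ω‖ ^ 2 ∂μ ≤ M₂ * ∫ ω, ‖F' (X ω)‖ ^ 2 ∂μ := by
    rw [← integral_const_mul]
    exact integral_le_of_condExp_le hm (hF'X2.const_mul M₂) hvar
  have hC := integral_mul_le_sqrt_mul_integral_sq hnorms hF'X2 hG2 hM₂ hB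
  have hAC : ∫ ω, ‖F' (X ω)‖ ^ 2 ∂μ ≤ ∫ ω, ‖F' (X ω)‖ * ‖G ω‖ ∂μ :=
    hI ▸ integral_mono hinner hnorms fun ω => real_inner_le_norm _ _
  have hdescent := integral_trish_step_le hL.le hgrad hlip hα.le hγ₂ hγ.le hX' hFX hFX'
    hinner hnorms hG2
  rw [hI] at hdescent
  linarith [trish_gain_le hL hα hγ₂ hγ hratio hαlt (integral_nonneg fun ω => by positivity)
    hAC hC hB]

theorem mul_sum_Icc_le_sub_of_add_mul_le {Φ a : ℕ → ℝ} {c lb : ℝ}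
    (hstep : ∀ k, Φ (k + 1) + c * a k ≤ Φ k) (hlb : ∀ k, lb ≤ Φ k) (K : ℕ) :
    c * ∑ k ∈ Finset.Icc 1 K, a k ≤ Φ 1 - lb := by
  have htelescope : ∀ K, Φ (K + 1) + c * ∑ k ∈ Finset.Icc 1 K, a k ≤ Φ 1 := by
    intro K
    induction K with
    | zero => simp
    | succ K ih =>
      rw [Finset.sum_Icc_succ_top (Nat.le_add_left 1 K), mul_add]
      linarith [hstep (K + 1)]
  linarith [htelescope K, hlb (K + 1)]

theorem average_le_and_tendsto_zero {a : ℕ → ℝ} {c D : ℝ} (hc : 0 < c) (ha : ∀ k, 0 ≤ a k)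
    (hsum : ∀ K, c * ∑ k ∈ Finset.Icc 1 K, a k ≤ D) :
    (∀ K : ℕ, 1 ≤ K → 1 / (K : ℝ) * ∑ k ∈ Finset.Icc 1 K, a k ≤ D / (K * c)) ∧
      Filter.Tendsto (fun K : ℕ => 1 / (K : ℝ) * ∑ k ∈ Finset.Icc 1 K, a k)
        Filter.atTop (nhds 0) := by
  have hbound : ∀ K : ℕ, 1 ≤ K → 1 / (K : ℝ) * ∑ k ∈ Finset.Icc 1 K, a k ≤ D / (K * c) := by
    intro K hK
    have hK0 : (0 : ℝ) < K := by exact_mod_cast hK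
    rw [one_div_mul_eq_div, div_le_div_iff₀ hK0 (by positivity)]
    nlinarith [hsum K]
  refine ⟨hbound, squeeze_zero' (Filter.Eventually.of_forall fun K => ?_)
    ((Filter.eventually_ge_atTop 1).mono hbound) ?_⟩
  · exact mul_nonneg (by positivity) (Finset.sum_nonneg fun k _ => ha k)
  · exact (tendsto_const_div_atTop_nhds_zero_nat (D / c)).congr fun K => by ring

theorem stmt_15 {n : ℕ} (F : EuclideanSpace ℝ (Fin n) → ℝ)
    (F' : EuclideanSpace ℝ (Fin n) → EuclideanSpace ℝ (Fin n))
    (L Fstar : ℝ) (hL : 0 < L)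
    (hgrad : ∀ y, HasGradientAt F (F' y) y)
    (hlip : LipschitzWith (Real.toNNReal L) F')
    (hbdd : ∀ y, Fstar ≤ F y)
    (α γ₁ γ₂ M₂ : ℝ) (hα : 0 < α) (hγ₂ : 0 < γ₂) (hγ : γ₂ < γ₁) (hM₂ : 0 < M₂)
    (hratio : (γ₂ / γ₁) ^ 2 > 1 - 1 / (4 * M₂))
    (hαlt : α < 1 / (4 * γ₂ * L * M₂))
    {Ω : Type*} {m0 : MeasurableSpace Ω} (μ : Measure Ω) [IsProbabilityMeasure μ]
    (ℱ : Filtration ℕ m0)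
    (x g : ℕ → Ω → EuclideanSpace ℝ (Fin n))
    (hadapted : Adapted ℱ x)
    (hstep : ∀ k ω, x (k + 1) ω = x k ω +
      (if ‖g k ω‖ < 1 / γ₁ then (-(γ₁ * α)) • g k ω
       else if ‖g k ω‖ ≤ 1 / γ₂ then (-(α / ‖g k ω‖)) • g k ω
       else (-(γ₂ * α)) • g k ω))
    (hintg : ∀ k, Integrable (g k) μ)
    (hintF : ∀ k, Integrable (fun ω => F (x k ω)) μ)
    (hint2 : ∀ k, Integrable (fun ω => ‖g k ω‖ ^ 2) μ)
    (hintgrad : ∀ k, Integrable (fun ω => ‖F' (x k ω)‖ ^ 2) μ)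
    (hunbiased : ∀ k, μ[g k | ℱ k] =ᵐ[μ] fun ω => F' (x k ω))
    (hvar : ∀ k, ∀ᵐ ω ∂μ,
      (μ[fun ω' => ‖g k ω'‖ ^ 2 | ℱ k]) ω ≤ M₂ * ‖F' (x k ω)‖ ^ 2) :
    (∀ K : ℕ, 1 ≤ K →
      (∫ ω, (1 / (K : ℝ)) * ∑ k ∈ Finset.Icc 1 K, ‖F' (x k ω)‖ ^ 2 ∂μ) ≤
        4 * γ₂ * ((∫ ω, F (x 1 ω) ∂μ) - Fstar) / ((K : ℝ) * α * γ₁ ^ 2)) ∧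
      Filter.Tendsto
        (fun K : ℕ => ∫ ω, (1 / (K : ℝ)) * ∑ k ∈ Finset.Icc 1 K, ‖F' (x k ω)‖ ^ 2 ∂μ)
        Filter.atTop (nhds 0) := by
  have hγ₁ : 0 < γ₁ := hγ₂.trans hγ
  set D := ∫ ω, F (x 1 ω) ∂μ - Fstar
  have hsum : ∀ K, α * γ₁ ^ 2 / (4 * γ₂) * ∑ k ∈ Finset.Icc 1 K, ∫ ω, ‖F' (x k ω)‖ ^ 2 ∂μ ≤ D :=
    mul_sum_Icc_le_sub_of_add_mul_le
      (fun k => integral_trish_step_add_le hL hgrad hlip hα hγ₂ hγ hM₂ hratio hαlt (ℱ.le k)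
        (hadapted k).stronglyMeasurable (hstep k) (hintg k) (hintF k) (hintF (k + 1))
        (hint2 k) (hintgrad k) (hunbiased k) (hvar k))
      fun k => by simpa using integral_mono (integrable_const Fstar) (hintF k) fun ω => hbdd _
  have havg : ∀ K : ℕ, ∫ ω, (1 / (K : ℝ)) * ∑ k ∈ Finset.Icc 1 K, ‖F' (x k ω)‖ ^ 2 ∂μ =
      1 / (K : ℝ) * ∑ k ∈ Finset.Icc 1 K, ∫ ω, ‖F' (x k ω)‖ ^ 2 ∂μ := fun K => by
    rw [integral_const_mul, integral_finsetSum _ fun k _ => hintgrad k]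
  obtain ⟨hbound, hlim⟩ := average_le_and_tendsto_zero (by positivity)
    (fun k => integral_nonneg fun ω => by positivity) hsum
  simp only [havg]
  exact ⟨fun K hK => (hbound K hK).trans_eq (by field_simp), hlim⟩
end
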